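/- For i ≤ m and j ≤ n, the osp(m|2n) generator L_{i,2j-1+m} = 2xᵢ ∂_{x'_{2j}} − x'_{2j-1} ∂_{xᵢ} acts on f_{k,p,q} by L_{i,2j-1+m} f_{k,p,q} = 2k(M/2 + p + q + k − 1) f_{k-1,p+1,q+1} xᵢ x'_{2j-1}, where M = m − 2n. -/

import Mathlib

open scoped TensorProduct
open MvPolynomial
set_option synthInstance.maxHeartbeats 1000000
set_option maxHeartbeats 1000000

noncomputable section

/-- The Grassmann algebra on `N` anticommuting generators, modelled as the
exterior algebra of `ℝ^N`. -/
abbrev GrassAlg (N : ℕ) : Type _ := ExteriorAlgebra ℝ (Fin N → ℝ)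

/-- The Grassmann generators `x'_j`. -/
def gGen {N : ℕ} (j : Fin N) : GrassAlg N := ExteriorAlgebra.ι ℝ (Pi.single j 1)

/-- The (left) Grassmann derivative `∂_{x'_j}`, an odd derivation of the Grassmann
algebra, realized as left contraction with the `j`-th dual basis vector. -/
def gDer {N : ℕ} (j : Fin N) : GrassAlg N →ₗ[ℝ] GrassAlg N :=
  CliffordAlgebra.contractLeft (LinearMap.proj j)

/-- The index `2j-1` (1-based), i.e. `2j` (0-based). -/
def fi1 {n : ℕ} (j : Fin n) : Fin (2 * n) := ⟨2 * j.1, by have := j.isLt; omega⟩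

/-- The index `2j` (1-based), i.e. `2j+1` (0-based). -/
def fi2 {n : ℕ} (j : Fin n) : Fin (2 * n) := ⟨2 * j.1 + 1, by have := j.isLt; omega⟩

/-- `θ² = - Σ_j x'_{2j-1} x'_{2j}`. -/
def thetaSq (n : ℕ) : GrassAlg (2 * n) :=
  - ∑ j : Fin n, gGen (fi1 j) * gGen (fi2 j)

/-- The fermionic Laplacian `∇²_f = -4 Σ_j ∂_{x'_{2j-1}} ∂_{x'_{2j}}`. -/
def fLap (n : ℕ) : Module.End ℝ (GrassAlg (2 * n)) :=
  -(4 : ℝ) • ∑ j : Fin n, gDer (fi1 j) * gDer (fi2 j)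

/-- The fermionic Euler operator `𝔼_f = Σ_j x'_j ∂_{x'_j}`. -/
def fEuler (N : ℕ) : Module.End ℝ (GrassAlg N) :=
  ∑ j : Fin N, LinearMap.mulLeft ℝ (gGen j) * gDer j

/-- Fermionic spherical harmonics of degree `k`. -/
def fHarm (n k : ℕ) : Submodule ℝ (GrassAlg (2 * n)) :=
  Module.End.eigenspace (fEuler (2 * n)) (k : ℝ) ⊓ LinearMap.ker (fLap n)

/-- The algebra of super polynomials `P = ℝ[x_1,…,x_m] ⊗ Λ_{2n}`. -/
abbrev SP (m n : ℕ) : Type _ := MvPolynomial (Fin m) ℝ ⊗[ℝ] GrassAlg (2 * n)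

variable (m n : ℕ)

/-- Multiplication by the bosonic variable `x_i`. -/
def bvar (i : Fin m) : Module.End ℝ (SP m n) :=
  LinearMap.rTensor _ (LinearMap.mulLeft ℝ (X i))

/-- The bosonic derivative `∂_{x_i}`. -/
def bder (i : Fin m) : Module.End ℝ (SP m n) :=
  LinearMap.rTensor _ (pderiv i).toLinearMap

/-- Multiplication by the fermionic variable `x'_j`. -/
def fvar (j : Fin (2 * n)) : Module.End ℝ (SP m n) :=
  LinearMap.lTensor _ (LinearMap.mulLeft ℝ (gGen j))

/-- The fermionic derivative `∂_{x'_j}` on super polynomials. -/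
def fderSP (j : Fin (2 * n)) : Module.End ℝ (SP m n) :=
  LinearMap.lTensor _ (gDer j)

/-- The super Laplace operator `∇² = Σ_i ∂²_{x_i} - 4 Σ_j ∂_{x'_{2j-1}} ∂_{x'_{2j}}`. -/
def superLap : Module.End ℝ (SP m n) :=
  ∑ i : Fin m, bder m n i * bder m n i
    - (4 : ℝ) • ∑ j : Fin n, fderSP m n (fi1 j) * fderSP m n (fi2 j)

/-- The super Euler operator `𝔼 = Σ_i x_i ∂_{x_i} + Σ_j x'_j ∂_{x'_j}`. -/
def superEuler : Module.End ℝ (SP m n) :=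
  ∑ i : Fin m, bvar m n i * bder m n i + ∑ j : Fin (2 * n), fvar m n j * fderSP m n j

/-- The generalized norm squared `R² = Σ_i x_i² - Σ_j x'_{2j-1} x'_{2j}`. -/
def rSq : SP m n := (∑ i : Fin m, X i * X i) ⊗ₜ[ℝ] 1 + 1 ⊗ₜ[ℝ] thetaSq n

/-- Multiplication by `R²`. -/
def mulRSq : Module.End ℝ (SP m n) := LinearMap.mulLeft ℝ (rSq m n)

/-- Super polynomials of homogeneous degree `k` (eigenspace of the Euler operator). -/
def Pdeg (k : ℕ) : Submodule ℝ (SP m n) :=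
  Module.End.eigenspace (superEuler m n) (k : ℝ)

/-- Spherical harmonics of degree `k`: degree-`k` null-solutions of `∇²`. -/
def Harm (k : ℕ) : Submodule ℝ (SP m n) :=
  Pdeg m n k ⊓ LinearMap.ker (superLap m n)

/-- Evaluation at the origin: the scalar part of a super polynomial. -/
def scalarPart : SP m n →ₐ[ℝ] ℝ :=
  Algebra.TensorProduct.productMap (aeval fun _ => (0 : ℝ)) ExteriorAlgebra.algebraMapInv

/-- Parity `[i]` of the super coordinates: `0` for bosonic, `1` for fermionic. -/
def par (i : Fin (m + 2 * n)) : ℕ := if i.1 < m then 0 else 1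

/-- The orthosymplectic metric `g^{ij}` (identity bosonic block, `J`-type fermionic
block with entries `∓ 1/2`). -/
def gUp (i j : Fin (m + 2 * n)) : ℝ :=
  if i.1 < m ∧ j.1 < m then (if i = j then 1 else 0)
  else if m ≤ i.1 ∧ j.1 = i.1 + 1 ∧ (i.1 - m) % 2 = 0 then -(1 / 2)
  else if m ≤ j.1 ∧ i.1 = j.1 + 1 ∧ (j.1 - m) % 2 = 0 then 1 / 2
  else 0

/-- The inverse orthosymplectic metric `g_{ij}`. -/
def gDown (i j : Fin (m + 2 * n)) : ℝ :=
  if i.1 < m ∧ j.1 < m then (if i = j then 1 else 0)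
  else if m ≤ i.1 ∧ j.1 = i.1 + 1 ∧ (i.1 - m) % 2 = 0 then 2
  else if m ≤ j.1 ∧ i.1 = j.1 + 1 ∧ (j.1 - m) % 2 = 0 then -2
  else 0

/-- Multiplication by the super coordinate `X_i`. -/
def svar (i : Fin (m + 2 * n)) : Module.End ℝ (SP m n) :=
  if h : i.1 < m then bvar m n ⟨i.1, h⟩
  else fvar m n ⟨i.1 - m, by have := i.isLt; omega⟩

/-- The super derivative `∂_{X_i}`. -/
def sder (i : Fin (m + 2 * n)) : Module.End ℝ (SP m n) :=
  if h : i.1 < m then bder m n ⟨i.1, h⟩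
  else fderSP m n ⟨i.1 - m, by have := i.isLt; omega⟩

/-- The raised super derivative `∂_{X^j}`. -/
def sderUp (j : Fin (m + 2 * n)) : Module.End ℝ (SP m n) :=
  ∑ k : Fin (m + 2 * n), gDown m n j k • sder m n k

/-- The `osp(m|2n)` generators `L_{ij} = X_i ∂_{X^j} - (-1)^{[i][j]} X_j ∂_{X^i}`. -/
def Lgen (i j : Fin (m + 2 * n)) : Module.End ℝ (SP m n) :=
  svar m n i * sderUp m n j
    - ((-1 : ℝ) ^ (par m n i * par m n j)) • (svar m n j * sderUp m n i)

/-- The Laplace–Beltrami operator `Δ_LB = R²∇² - 𝔼(M - 2 + 𝔼)`. -/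
def lapBeltrami : Module.End ℝ (SP m n) :=
  mulRSq m n * superLap m n
    - superEuler m n *
        ((((m : ℝ) - 2 * n) - 2) • (1 : Module.End ℝ (SP m n)) + superEuler m n)

/-- The bosonic Laplacian on ordinary polynomials. -/
def bLap : Module.End ℝ (MvPolynomial (Fin m) ℝ) :=
  ∑ i : Fin m, (pderiv i).toLinearMap * (pderiv i).toLinearMap

/-- The polynomial `f_{k,p,q} = Σ_s a_s r^{2k-2s} θ^{2s}` of Lemma `polythm`. -/
def fpoly (m n k p q : ℕ) : SP m n :=
  ∑ s ∈ Finset.range (k + 1),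
    ((k.choose s : ℝ) *
        (((n - q - s).factorial : ℝ) / Real.Gamma ((m : ℝ) / 2 + p + k - s)) *
        (Real.Gamma ((m : ℝ) / 2 + p + k) / ((n - q - k).factorial : ℝ))) •
      ((((∑ i : Fin m, X i * X i) ⊗ₜ[ℝ] (1 : GrassAlg (2 * n))) ^ (k - s)) *
        (((1 : MvPolynomial (Fin m) ℝ) ⊗ₜ[ℝ] thetaSq n) ^ s))

section Aux

lemma gDer_gGen {N : ℕ} (a b : Fin N) :
    gDer a (gGen b) = (if a = b then (1:ℝ) else 0) • 1 := by
  rw [gDer, gGen, CliffordAlgebra.contractLeft_ι, Algebra.algebraMap_eq_smul_one]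
  congr 1
  simp [LinearMap.proj_apply, Pi.single_apply]

lemma gDer_one {N : ℕ} (a : Fin N) : gDer a (1 : GrassAlg N) = 0 := by
  rw [gDer]; exact CliffordAlgebra.contractLeft_one _ _

lemma gDer_gGen_mul {N : ℕ} (a b : Fin N) (x : GrassAlg N) :
    gDer a (gGen b * x) = (if a = b then (1:ℝ) else 0) • x - gGen b * gDer a x := by
  rw [gDer, gGen, CliffordAlgebra.contractLeft_ι_mul]
  congr 2
  simp [LinearMap.proj_apply, Pi.single_apply]

lemma gGen_anticomm {N : ℕ} (a b : Fin N) :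
    gGen a * gGen b = -(gGen b * gGen a) := by
  have := ExteriorAlgebra.ι_add_mul_swap (R := ℝ)
    (Pi.single a 1 : Fin N → ℝ) (Pi.single b 1 : Fin N → ℝ)
  rw [gGen, gGen]
  linear_combination (norm := noncomm_ring) this

lemma gGen_comm_pair {N : ℕ} (a b c : Fin N) :
    gGen c * (gGen a * gGen b) = gGen a * gGen b * gGen c := by
  rw [← mul_assoc, gGen_anticomm c a, neg_mul, mul_assoc, gGen_anticomm c b, mul_neg, neg_neg,
    mul_assoc]

lemma gGen_comm_thetaSq {n : ℕ} (c : Fin (2 * n)) :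
    gGen c * thetaSq n = thetaSq n * gGen c := by
  rw [thetaSq, mul_neg, neg_mul, Finset.mul_sum, Finset.sum_mul]
  congr 1
  exact Finset.sum_congr rfl fun l _ => gGen_comm_pair _ _ _

lemma gGen_comm_thetaSq_pow {n : ℕ} (c : Fin (2 * n)) (t : ℕ) :
    gGen c * thetaSq n ^ t = thetaSq n ^ t * gGen c := by
  induction t with
  | zero => simp
  | succ t ih => rw [pow_succ, ← mul_assoc, ih, mul_assoc, gGen_comm_thetaSq, ← mul_assoc]

lemma gDer_pair {N : ℕ} (d a b : Fin N) :
    gDer d (gGen a * gGen b) =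
      (if d = a then (1:ℝ) else 0) • gGen b - (if d = b then (1:ℝ) else 0) • gGen a := by
  rw [gDer_gGen_mul, gDer_gGen, mul_smul_comm, mul_one]

lemma gDer_pair_mul {N : ℕ} (d a b : Fin N) (x : GrassAlg N) :
    gDer d (gGen a * gGen b * x) =
      gDer d (gGen a * gGen b) * x + gGen a * gGen b * gDer d x := by
  rw [gDer_pair, mul_assoc, gDer_gGen_mul, gDer_gGen_mul, mul_sub, sub_mul, smul_mul_assoc,
    smul_mul_assoc, mul_smul_comm, mul_assoc]
  abel

lemma gDer_thetaSq_mul {n : ℕ} (d : Fin (2 * n)) (x : GrassAlg (2 * n)) :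
    gDer d (thetaSq n * x) = gDer d (thetaSq n) * x + thetaSq n * gDer d x := by
  have key : gDer d ((∑ l : Fin n, gGen (fi1 l) * gGen (fi2 l)) * x)
      = gDer d (∑ l : Fin n, gGen (fi1 l) * gGen (fi2 l)) * x
        + (∑ l : Fin n, gGen (fi1 l) * gGen (fi2 l)) * gDer d x := by
    rw [Finset.sum_mul, map_sum, map_sum, Finset.sum_mul, Finset.sum_mul,
      ← Finset.sum_add_distrib]
    exact Finset.sum_congr rfl fun l _ => gDer_pair_mul _ _ _ _
  rw [thetaSq, neg_mul, map_neg, map_neg, key, neg_add, neg_mul, neg_mul]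

lemma fi1_val {n : ℕ} (j : Fin n) : (fi1 j).1 = 2 * j.1 := rfl
lemma fi2_val {n : ℕ} (j : Fin n) : (fi2 j).1 = 2 * j.1 + 1 := rfl

lemma gDer_fi2_thetaSq {n : ℕ} (j : Fin n) :
    gDer (fi2 j) (thetaSq n) = gGen (fi1 j) := by
  rw [thetaSq, map_neg, map_sum]
  have : ∀ l : Fin n, gDer (fi2 j) (gGen (fi1 l) * gGen (fi2 l))
      = -((if j = l then (1:ℝ) else 0) • gGen (fi1 l)) := by
    intro l
    rw [gDer_pair]
    have h1 : (fi2 j = fi1 l) = False := by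
      simp only [eq_iff_iff, iff_false]
      intro h
      have := congrArg Fin.val h
      simp only [fi1_val, fi2_val] at this
      omega
    have h2 : (fi2 j = fi2 l) = (j = l) := by
      simp only [eq_iff_iff]
      constructor
      · intro h
        have := congrArg Fin.val h
        simp only [fi2_val] at this
        exact Fin.ext (by omega)
      · rintro rfl; rfl
    simp only [h1, h2, if_false, zero_smul, zero_sub]
  rw [Finset.sum_congr rfl fun l _ => this l]
  simp [Finset.sum_ite_eq]

lemma gDer_fi2_thetaSq_pow {n : ℕ} (j : Fin n) (s : ℕ) :
    gDer (fi2 j) (thetaSq n ^ s) = (s : ℝ) • (gGen (fi1 j) * thetaSq n ^ (s - 1)) := by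
  induction s with
  | zero => simp [gDer_one]
  | succ s ih =>
    rw [pow_succ', gDer_thetaSq_mul, ih, gDer_fi2_thetaSq, mul_smul_comm,
      gGen_comm_thetaSq_pow]
    rcases Nat.eq_zero_or_pos s with rfl | hs
    · simp
    · have h1 : s - 1 + 1 = s := Nat.succ_pred_eq_of_pos hs
      have h2 : thetaSq n * (gGen (fi1 j) * thetaSq n ^ (s - 1))
          = gGen (fi1 j) * thetaSq n ^ s := by
        rw [← mul_assoc, ← gGen_comm_thetaSq, mul_assoc, ← pow_succ', h1]
      rw [Nat.add_sub_cancel, h2, ← gGen_comm_thetaSq_pow]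
      push_cast
      rw [add_smul, one_smul, add_comm]

end Aux
lemma pderiv_rsq (m : ℕ) (i : Fin m) :
    pderiv i (∑ l : Fin m, X l * X l : MvPolynomial (Fin m) ℝ) = 2 * X i := by
  rw [map_sum, Finset.sum_eq_single i]
  · rw [pderiv_mul, pderiv_X_self]; ring
  · intro b _ hb; rw [pderiv_mul, pderiv_X_of_ne hb]; ring
  · intro h; exact absurd (Finset.mem_univ i) h

lemma pderiv_rsq_pow (m : ℕ) (i : Fin m) (a : ℕ) :
    pderiv i ((∑ l : Fin m, X l * X l) ^ a : MvPolynomial (Fin m) ℝ)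
      = (2 * (a : ℝ)) • (X i * (∑ l : Fin m, X l * X l) ^ (a - 1)) := by
  rw [Derivation.leibniz_pow, pderiv_rsq, smul_eq_mul, ← Nat.cast_smul_eq_nsmul ℝ]
  rw [smul_eq_C_mul, smul_eq_C_mul, map_mul, map_ofNat]
  ring

lemma pderiv_rsq_pow' (m : ℕ) (i : Fin m) (a : ℕ) :
    (pderiv i).toLinearMap ((∑ l : Fin m, X l * X l) ^ a : MvPolynomial (Fin m) ℝ)
      = (2 * (a : ℝ)) • (X i * (∑ l : Fin m, X l * X l) ^ (a - 1)) :=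
  pderiv_rsq_pow m i a

lemma Eterm (m n : ℕ) (i : Fin m) (j : Fin n) (a s : ℕ) :
    ((2 : ℝ) • (bvar m n i * fderSP m n (fi2 j)) - fvar m n (fi1 j) * bder m n i)
        ((((∑ l : Fin m, X l * X l) ⊗ₜ[ℝ] (1 : GrassAlg (2 * n))) ^ a) *
          (((1 : MvPolynomial (Fin m) ℝ) ⊗ₜ[ℝ] thetaSq n) ^ s)) =
      (2 * (s : ℝ)) •
          ((X i * (∑ l : Fin m, X l * X l) ^ a) ⊗ₜ[ℝ]
            (gGen (fi1 j) * thetaSq n ^ (s - 1)))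
        - (2 * (a : ℝ)) •
          ((X i * (∑ l : Fin m, X l * X l) ^ (a - 1)) ⊗ₜ[ℝ]
            (gGen (fi1 j) * thetaSq n ^ s)) := by
  have hT : (((∑ l : Fin m, X l * X l) ⊗ₜ[ℝ] (1 : GrassAlg (2 * n))) ^ a) *
        (((1 : MvPolynomial (Fin m) ℝ) ⊗ₜ[ℝ] thetaSq n) ^ s)
      = ((∑ l : Fin m, X l * X l) ^ a) ⊗ₜ[ℝ] (thetaSq n ^ s) := by
    rw [Algebra.TensorProduct.tmul_pow, Algebra.TensorProduct.tmul_pow, one_pow, one_pow,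
      Algebra.TensorProduct.tmul_mul_tmul, mul_one, one_mul]
  rw [hT, LinearMap.sub_apply, LinearMap.smul_apply, Module.End.mul_apply, Module.End.mul_apply,
    fderSP, bvar, fvar, bder,
    LinearMap.lTensor_tmul, gDer_fi2_thetaSq_pow, TensorProduct.tmul_smul, map_smul,
    LinearMap.rTensor_tmul, LinearMap.mulLeft_apply,
    LinearMap.rTensor_tmul, pderiv_rsq_pow', TensorProduct.smul_tmul']
  simp only [TensorProduct.smul_tmul', map_smul, LinearMap.lTensor_tmul,
    LinearMap.mulLeft_apply, smul_smul]
lemma div_gamma_eq (a x : ℝ) (hx : 0 ≤ x) :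
    a / Real.Gamma x = a * x / Real.Gamma (x + 1) := by
  rcases eq_or_lt_of_le hx with rfl | h
  · simp [Real.Gamma_zero]
  · have hg := Real.Gamma_pos_of_pos h
    rw [Real.Gamma_add_one h.ne']
    field_simp

lemma key_scalar (m n k p q t : ℕ) (hq : q ≤ n) (hk : k ≤ n - q) (ht : t < k) :
    (k.choose (t + 1) : ℝ) *
          (((n - q - (t + 1)).factorial : ℝ) /
            Real.Gamma ((m : ℝ) / 2 + p + k - ((t : ℝ) + 1))) *
          (Real.Gamma ((m : ℝ) / 2 + p + k) / ((n - q - k).factorial : ℝ)) *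
          (2 * ((t : ℝ) + 1))
      - (k.choose t : ℝ) *
          (((n - q - t).factorial : ℝ) / Real.Gamma ((m : ℝ) / 2 + p + k - t)) *
          (Real.Gamma ((m : ℝ) / 2 + p + k) / ((n - q - k).factorial : ℝ)) *
          (2 * ((k : ℝ) - t))
    = 2 * (k : ℝ) * (((m : ℝ) - 2 * n) / 2 + p + q + k - 1) *
        (((k - 1).choose t : ℝ) *
          (((n - (q + 1) - t).factorial : ℝ) /
            Real.Gamma ((m : ℝ) / 2 + ((p : ℝ) + 1) + ((k : ℝ) - 1) - t)) *
          (Real.Gamma ((m : ℝ) / 2 + ((p : ℝ) + 1) + ((k : ℝ) - 1)) /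
            ((n - (q + 1) - (k - 1)).factorial : ℝ))) := by
  have hkpos : 1 ≤ k := by omega
  have htk : (t : ℝ) + 1 ≤ (k : ℝ) := by exact_mod_cast ht
  have hm0 : (0 : ℝ) ≤ (m : ℝ) / 2 := by positivity
  have hp0 : (0 : ℝ) ≤ (p : ℝ) := by positivity
  -- index normalizations
  have h1 : n - q - (t + 1) = n - q - t - 1 := by omega
  have h2 : n - (q + 1) - t = n - q - t - 1 := by omega
  have h3 : n - (q + 1) - (k - 1) = n - q - k := by omega
  rw [h1, h2, h3]
  -- Gamma argument normalizations
  have hg1 : (m : ℝ) / 2 + p + k - ((t : ℝ) + 1) = ((m : ℝ) / 2 + p + k - t - 1) := by ring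
  have hg2 : (m : ℝ) / 2 + ((p : ℝ) + 1) + ((k : ℝ) - 1) - t = (m : ℝ) / 2 + p + k - t := by
    ring
  have hg3 : (m : ℝ) / 2 + ((p : ℝ) + 1) + ((k : ℝ) - 1) = (m : ℝ) / 2 + p + k := by ring
  rw [hg1, hg2, hg3]
  -- Gamma recursion
  have hz0 : (0 : ℝ) ≤ (m : ℝ) / 2 + p + k - t - 1 := by linarith
  have hΓ : (0 : ℝ) < Real.Gamma ((m : ℝ) / 2 + p + k - t) :=
    Real.Gamma_pos_of_pos (by linarith)
  rw [div_gamma_eq _ _ hz0, show (m : ℝ) / 2 + p + k - t - 1 + 1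
      = (m : ℝ) / 2 + p + k - t by ring]
  -- factorial recursion
  have hcnq : ((n - q - t : ℕ) : ℝ) = (n : ℝ) - q - t := by
    have e : n - q - t = n - (q + t) := by omega
    rw [e, Nat.cast_sub (by omega)]; push_cast; ring
  have hfact : ((n - q - t).factorial : ℝ)
      = ((n : ℝ) - q - t) * ((n - q - t - 1).factorial : ℝ) := by
    rw [← hcnq]; exact_mod_cast (Nat.mul_factorial_pred (by omega)).symm
  rw [hfact]
  -- choose recursions
  have hA : k * (k - 1).choose t = k.choose (t + 1) * (t + 1) := by
    have h := Nat.add_one_mul_choose_eq (k - 1) t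
    simpa [Nat.succ_eq_add_one, Nat.sub_add_cancel hkpos] using h
  have hB : k.choose (t + 1) * (t + 1) = k.choose t * (k - t) :=
    Nat.choose_succ_right_eq k t
  have hc1 : (k.choose (t + 1) : ℝ) = (k : ℝ) * ((k - 1).choose t : ℝ) / ((t : ℝ) + 1) := by
    rw [eq_div_iff (by positivity)]
    exact_mod_cast hA.symm
  have hc2 : (k.choose t : ℝ) = (k : ℝ) * ((k - 1).choose t : ℝ) / ((k : ℝ) - t) := by
    rw [eq_div_iff (by intro h; nlinarith)]
    have hkt : ((k - t : ℕ) : ℝ) = (k : ℝ) - t := Nat.cast_sub ht.le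
    rw [← hkt]
    exact_mod_cast (hA.trans hB).symm
  rw [hc1, hc2]
  have hfac0 : ((n - q - k).factorial : ℝ) ≠ 0 := by
    exact_mod_cast (n - q - k).factorial_ne_zero
  have hden1 : ((t : ℝ) + 1) ≠ 0 := by positivity
  have hden2 : ((k : ℝ) - t) ≠ 0 := by intro h; nlinarith
  set Gz := Real.Gamma ((m : ℝ) / 2 + ↑p + ↑k - ↑t) with hGz
  set G := Real.Gamma ((m : ℝ) / 2 + ↑p + ↑k) with hG
  set F := ((n - q - t - 1).factorial : ℝ) with hF
  set Ff := ((n - q - k).factorial : ℝ) with hFf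
  field_simp [hΓ.ne', hfac0, hden1, hden2]
  ring
/-- `L_{i,2j-1+m} f_{k,p,q} = 2k(M/2+p+q+k-1) f_{k-1,p+1,q+1} x_i x'_{2j-1}`. -/
theorem Lgen_on_fpoly (m n k p q : ℕ) (hq : q ≤ n) (hk : k ≤ n - q)
    (i : Fin m) (j : Fin n) :
    ((2 : ℝ) • (bvar m n i * fderSP m n (fi2 j)) - fvar m n (fi1 j) * bder m n i)
        (fpoly m n k p q) =
      (2 * (k : ℝ) * (((m : ℝ) - 2 * n) / 2 + p + q + k - 1)) •
        (fpoly m n (k - 1) (p + 1) (q + 1) * (X i ⊗ₜ[ℝ] gGen (fi1 j))) := by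
  rcases Nat.eq_zero_or_pos k with rfl | hkpos
  · rw [fpoly]
    simp only [zero_add, Finset.range_one, Finset.sum_singleton, map_smul, Eterm]
    simp
  · conv_lhs => rw [fpoly, map_sum]
    simp only [map_smul, Eterm, smul_sub, smul_smul]
    rw [Finset.sum_sub_distrib, Finset.sum_range_succ' _ k, Finset.sum_range_succ]
    simp only [Nat.cast_zero, mul_zero, zero_smul, add_zero, Nat.sub_self, sub_zero]
    rw [← Finset.sum_sub_distrib]
    conv_rhs => rw [fpoly, Finset.sum_mul]
    simp only [smul_mul_assoc]
    rw [Finset.smul_sum]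
    simp only [smul_smul]
    rw [show k - 1 + 1 = k from by omega]
    refine Finset.sum_congr rfl fun t htm => ?_
    rw [Finset.mem_range] at htm
    have hTZ : ((((∑ l : Fin m, X l * X l) ⊗ₜ[ℝ] (1 : GrassAlg (2 * n))) ^ (k - 1 - t)) *
          (((1 : MvPolynomial (Fin m) ℝ) ⊗ₜ[ℝ] thetaSq n) ^ t)) * (X i ⊗ₜ[ℝ] gGen (fi1 j))
        = (X i * (∑ l : Fin m, X l * X l) ^ (k - 1 - t)) ⊗ₜ[ℝ]
            (gGen (fi1 j) * thetaSq n ^ t) := by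
      rw [Algebra.TensorProduct.tmul_pow, Algebra.TensorProduct.tmul_pow, one_pow, one_pow,
        Algebra.TensorProduct.tmul_mul_tmul, mul_one, one_mul,
        Algebra.TensorProduct.tmul_mul_tmul, ← gGen_comm_thetaSq_pow,
        mul_comm ((∑ l : Fin m, X l * X l) ^ (k - 1 - t)) (X i)]
    rw [hTZ, show k - (t + 1) = k - t - 1 from by omega, show t + 1 - 1 = t from rfl,
      show k - 1 - t = k - t - 1 from by omega, ← sub_smul]
    congr 1
    have hkey := key_scalar m n k p q t hq hk htm
    push_cast [Nat.cast_sub htm.le, Nat.cast_sub hkpos] at hkey ⊢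
    linear_combination hkey
end
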